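/- The compact lists form a submonoid of (L, ∗̄, []), and this submonoid is a free monoid: every nonempty compact list l can be written in exactly one way as l = l_1 ∗̄ l_2 ∗̄ ⋯ ∗̄ l_r where each l_i is a nonempty compact list admitting no factorization into a ∗̄-product of two nonempty lists. -/

import Mathlib

open scoped TensorProduct

/-- A monomial: a nonzero finitely supported multi-index with support contained in `{1,2,…}`. -/
def Mon : Type := {m : ℕ →₀ ℕ // m ≠ 0 ∧ m 0 = 0}

namespace Mon

/-- Product of monomials: pointwise addition of multi-indices. -/
noncomputable instance : Mul Mon :=
  ⟨fun a b =>
    ⟨a.1 + b.1, by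
      constructor
      · intro h
        exact a.2.1 ((add_eq_zero.mp h).1)
      · simp [Finsupp.add_apply, a.2.2, b.2.2]⟩⟩

/-- The total degree (weight) of a monomial. -/
def w (m : Mon) : ℕ := m.1.sum fun _ v => v

/-- The set of variable indices occurring in a list of monomials. -/
def IndAlph (l : List Mon) : Finset ℕ := (l.map fun m => m.1.support).foldr (· ∪ ·) ∅

/-- The maximal variable index occurring in a list of monomials (`0` for the empty list). -/
def maxInd (l : List Mon) : ℕ := (IndAlph l).sup id

/-- The embedding `i ↦ i + p` of `ℕ` into itself. -/
def addEmb (p : ℕ) : ℕ ↪ ℕ := ⟨fun i => i + p, fun a b h => by simpa using h⟩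

/-- The shift `T_p` of a monomial: translate the support by `p`. -/
noncomputable def Tmon (p : ℕ) (m : Mon) : Mon :=
  ⟨m.1.embDomain (addEmb p), by
    refine ⟨fun h => m.2.1 (Finsupp.embDomain_eq_zero.mp h), ?_⟩
    by_cases hp : p = 0
    · subst hp
      have h0 : (Finsupp.embDomain (addEmb 0) m.1) ((addEmb 0) 0) = m.1 0 :=
        Finsupp.embDomain_apply_self _ _ _
      simpa [addEmb] using h0.trans m.2.2
    · apply Finsupp.embDomain_notin_range
      rintro ⟨i, hi⟩
      have hi' : i + p = 0 := hi
      omega⟩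

/-- Shifted concatenation of lists of monomials. -/
noncomputable def sconc (l₁ l₂ : List Mon) : List Mon := l₁ ++ l₂.map (Tmon (maxInd l₁))

/-- A list of monomials is compact when its alphabet has no holes:
`IndAlph l = {1,…,card (IndAlph l)}`. -/
def Compact (l : List Mon) : Prop := IndAlph l = Finset.Icc 1 (IndAlph l).card

/-- The re-indexing function of a list `l` : on `IndAlph l` it is the unique strictly
increasing bijection onto `{1,…,card (IndAlph l)}` (extended injectively elsewhere). -/
noncomputable def phi (l : List Mon) (i : ℕ) : ℕ :=
  if h : i ∈ IndAlph l then
    (((IndAlph l).orderIsoOfFin rfl).symm ⟨i, h⟩ : Fin (IndAlph l).card) + 1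
  else i + (IndAlph l).card + 1

lemma phi_pos (l : List Mon) (i : ℕ) : 1 ≤ phi l i := by
  unfold phi; split_ifs <;> omega

lemma phi_inj (l : List Mon) : Function.Injective (phi l) := by
  intro a b hab
  unfold phi at hab
  split_ifs at hab with ha hb hb
  · have h1 : (((IndAlph l).orderIsoOfFin rfl).symm ⟨a, ha⟩) =
        (((IndAlph l).orderIsoOfFin rfl).symm ⟨b, hb⟩) := Fin.ext (by omega)
    have h2 := congrArg ((IndAlph l).orderIsoOfFin rfl) h1
    rw [OrderIso.apply_symm_apply, OrderIso.apply_symm_apply] at h2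
    exact congrArg Subtype.val h2
  · have := (((IndAlph l).orderIsoOfFin rfl).symm ⟨a, ha⟩).isLt; omega
  · have := (((IndAlph l).orderIsoOfFin rfl).symm ⟨b, hb⟩).isLt; omega
  · omega

/-- Action of the compacting operator of `l` on a single monomial. -/
noncomputable def cptMon (l : List Mon) (m : Mon) : Mon :=
  ⟨m.1.mapDomain (phi l), by
    constructor
    · intro h
      apply m.2.1
      exact Finsupp.mapDomain_injective (phi_inj l) (by simpa using h)
    · apply Finsupp.mapDomain_notin_range
      rintro ⟨i, hi⟩
      have := phi_pos l i
      omega⟩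

/-- The compacting operator on lists of monomials. -/
noncomputable def cpt (l : List Mon) : List Mon := l.map (cptMon l)

/-- `sub l I` is the sublist of `l` consisting of the entries whose (1-based) position
belongs to `I`. -/
def sub (l : List Mon) (I : Finset ℕ) : List Mon :=
  (List.range l.length).filterMap fun j => if j + 1 ∈ I then l[j]? else none

/-- `∗̄`-irreducible lists: nonempty and with no factorization into two nonempty lists. -/
def SIrred (l : List Mon) : Prop :=
  l ≠ [] ∧ ∀ u v : List Mon, l = sconc u v → u = [] ∨ v = []

end Mon

/-!
Shifted concatenation makes `L` a monoid with unit `[]` that is left cancellative, graded by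
length, and equidivisible: from `u ∗̄ v = u' ∗̄ v'` one of `u, u'` is a `∗̄`-prefix `u' = u ∗̄ w`
of the other, and then `v = w ∗̄ v'`. In such a monoid irreducible factorizations exist by
induction on length, and are unique because two irreducible first factors must coincide.
A factor of a compact list `u ∗̄ v` is again compact, since the indices of `u` are exactly the
indices of `u ∗̄ v` up to `maxInd u`; hence the compact irreducible factorizations of a compact
list are just its irreducible factorizations.
-/

namespace Mon

lemma addEmb_apply (p i : ℕ) : addEmb p i = i + p := rfl

lemma indAlph_cons (a : Mon) (t : List Mon) : IndAlph (a :: t) = a.1.support ∪ IndAlph t := rfl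

lemma mem_indAlph {l : List Mon} {i : ℕ} : i ∈ IndAlph l ↔ ∃ m ∈ l, i ∈ m.1.support := by
  induction l with
  | nil => simp [IndAlph]
  | cons a t ih => simp [indAlph_cons, ih]

lemma indAlph_append (l₁ l₂ : List Mon) : IndAlph (l₁ ++ l₂) = IndAlph l₁ ∪ IndAlph l₂ := by
  ext i
  simp only [mem_indAlph, List.mem_append, Finset.mem_union, or_and_right, exists_or]

lemma one_le_of_mem_indAlph {l : List Mon} {i : ℕ} (h : i ∈ IndAlph l) : 1 ≤ i := by
  obtain ⟨m, -, hm⟩ := mem_indAlph.mp h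
  refine Nat.one_le_iff_ne_zero.mpr fun hi => ?_
  exact Finsupp.mem_support_iff.mp hm (hi ▸ m.2.2)

lemma indAlph_eq_empty {l : List Mon} : IndAlph l = ∅ ↔ l = [] := by
  refine ⟨fun h => ?_, fun h => h ▸ rfl⟩
  cases l with
  | nil => rfl
  | cons a t =>
    simp only [indAlph_cons, Finset.union_eq_empty, Finsupp.support_eq_empty] at h
    exact absurd h.1 a.2.1

lemma le_maxInd {l : List Mon} {i : ℕ} (h : i ∈ IndAlph l) : i ≤ maxInd l :=
  Finset.le_sup (f := id) h

lemma maxInd_mem {l : List Mon} (h : l ≠ []) : maxInd l ∈ IndAlph l := by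
  obtain ⟨i, hi, hmax⟩ := Finset.exists_mem_eq_sup (IndAlph l)
    (Finset.nonempty_iff_ne_empty.mpr (mt indAlph_eq_empty.mp h)) id
  rwa [maxInd, hmax]

lemma maxInd_nil : maxInd [] = 0 := rfl

lemma support_tmon (p : ℕ) (m : Mon) : (Tmon p m).1.support = m.1.support.map (addEmb p) :=
  Finsupp.support_embDomain _ _

lemma tmon_zero : Tmon 0 = id := by
  have : addEmb 0 = Function.Embedding.refl ℕ := by ext; rfl
  funext m
  exact Subtype.ext (by simp only [Tmon, this, Finsupp.embDomain_refl, id])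

lemma tmon_tmon (p q : ℕ) (m : Mon) : Tmon p (Tmon q m) = Tmon (p + q) m := by
  have : (addEmb q).trans (addEmb p) = addEmb (p + q) := by
    ext i
    simp only [Function.Embedding.trans_apply, addEmb_apply]
    omega
  exact Subtype.ext (by simp only [Tmon, ← Finsupp.embDomain_trans_apply, this])

lemma tmon_comp_tmon (p q : ℕ) : Tmon p ∘ Tmon q = Tmon (p + q) :=
  funext (tmon_tmon p q)

lemma tmon_injective (p : ℕ) : Function.Injective (Tmon p) := fun _ _ h =>
  Subtype.ext (Finsupp.embDomain_injective _ (congrArg Subtype.val h))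

lemma indAlph_map_tmon (p : ℕ) (l : List Mon) :
    IndAlph (l.map (Tmon p)) = (IndAlph l).map (addEmb p) := by
  induction l with
  | nil => rfl
  | cons a t ih => simp [indAlph_cons, support_tmon, ih, Finset.map_union]

lemma mem_indAlph_sconc {u v : List Mon} {i : ℕ} :
    i ∈ IndAlph (sconc u v) ↔ i ∈ IndAlph u ∨ maxInd u < i ∧ i - maxInd u ∈ IndAlph v := by
  rw [sconc, indAlph_append, indAlph_map_tmon, Finset.mem_union, Finset.mem_map]
  refine or_congr_right ⟨?_, fun ⟨hi, hv⟩ => ⟨_, hv, by simp only [addEmb_apply]; omega⟩⟩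
  rintro ⟨j, hj, rfl⟩
  have := one_le_of_mem_indAlph hj
  simpa only [addEmb_apply, Nat.add_sub_cancel] using ⟨by omega, hj⟩

lemma maxInd_sconc (u v : List Mon) : maxInd (sconc u v) = maxInd u + maxInd v := by
  rcases eq_or_ne v [] with rfl | hv
  · simp [sconc, maxInd_nil]
  refine le_antisymm (Finset.sup_le fun i hi => ?_) (le_maxInd ?_)
  · rcases mem_indAlph_sconc.mp hi with hi | ⟨-, hi⟩
    · exact (le_maxInd hi).trans (Nat.le_add_right _ _)
    · have := le_maxInd hi
      simp only [id]
      omega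
  · have hmem := maxInd_mem hv
    have := one_le_of_mem_indAlph hmem
    exact mem_indAlph_sconc.mpr (Or.inr ⟨by omega, by simpa using hmem⟩)

lemma sconc_nil (u : List Mon) : sconc u [] = u := by simp [sconc]

lemma nil_sconc (v : List Mon) : sconc [] v = v := by
  simp [sconc, maxInd_nil, tmon_zero]

lemma length_sconc (u v : List Mon) : (sconc u v).length = u.length + v.length := by
  simp [sconc]

lemma sconc_eq_nil {u v : List Mon} : sconc u v = [] ↔ u = [] ∧ v = [] := by
  simp [sconc]

lemma sconc_assoc (u v w : List Mon) : sconc (sconc u v) w = sconc u (sconc v w) := by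
  rw [sconc, maxInd_sconc]
  simp only [sconc, List.map_append, List.map_map, List.append_assoc, tmon_comp_tmon]

lemma sconc_left_cancel {u v v' : List Mon} (h : sconc u v = sconc u v') : v = v' :=
  (List.map_injective_iff.mpr (tmon_injective _)) (List.append_cancel_left h)

lemma exists_sconc_of_append {u u' v v' x : List Mon} (hu' : u' = u ++ x)
    (hx : v.map (Tmon (maxInd u)) = x ++ v'.map (Tmon (maxInd u'))) :
    ∃ w, u' = sconc u w ∧ v = sconc w v' := by
  obtain ⟨w, y, rfl, rfl, hy⟩ := List.map_eq_append_iff.mp hx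
  have hu'w : u' = sconc u w := hu'
  refine ⟨w, hu'w, congrArg (w ++ ·) ?_⟩
  apply (List.map_injective_iff.mpr (tmon_injective (maxInd u)))
  rw [hy, hu'w, maxInd_sconc, List.map_map, tmon_comp_tmon]

lemma exists_sconc_of_sconc_eq_sconc {u v u' v' : List Mon} (h : sconc u v = sconc u' v') :
    (∃ w, u' = sconc u w ∧ v = sconc w v') ∨ (∃ w, u = sconc u' w ∧ v' = sconc w v) := by
  rcases List.append_eq_append_iff.mp h with ⟨x, hu', hx⟩ | ⟨x, hu, hx⟩
  · exact Or.inl (exists_sconc_of_append hu' hx)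
  · exact Or.inr (exists_sconc_of_append hu hx)

lemma foldr_sconc_append (A B : List (List Mon)) :
    (A ++ B).foldr sconc [] = sconc (A.foldr sconc []) (B.foldr sconc []) := by
  induction A with
  | nil => simp [nil_sconc]
  | cons a t ih => simp only [List.cons_append, List.foldr_cons, ih, sconc_assoc]

lemma indAlph_subset_Icc (l : List Mon) : IndAlph l ⊆ Finset.Icc 1 (maxInd l) := fun _ hi =>
  Finset.mem_Icc.mpr ⟨one_le_of_mem_indAlph hi, le_maxInd hi⟩

lemma compact_iff_eq_Icc {l : List Mon} : Compact l ↔ IndAlph l = Finset.Icc 1 (maxInd l) := by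
  refine ⟨fun h => ?_, fun h => ?_⟩
  · have hcard : (IndAlph l).card ≤ maxInd l := by
      simpa using Finset.card_le_card (indAlph_subset_Icc l)
    have hmax : maxInd l ≤ (IndAlph l).card :=
      Finset.sup_le fun i hi => (Finset.mem_Icc.mp (h ▸ hi)).2
    rwa [le_antisymm hmax hcard]
  · rw [Compact, h, Nat.card_Icc, Nat.add_sub_cancel]

lemma compact_iff {l : List Mon} : Compact l ↔ ∀ i, i ∈ IndAlph l ↔ 1 ≤ i ∧ i ≤ maxInd l := by
  simp only [compact_iff_eq_Icc, Finset.ext_iff, Finset.mem_Icc]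

lemma compact_nil : Compact ([] : List Mon) := rfl

lemma compact_sconc {u v : List Mon} (hu : Compact u) (hv : Compact v) :
    Compact (sconc u v) := by
  rw [compact_iff] at hu hv ⊢
  intro i
  rw [mem_indAlph_sconc, hu, hv, maxInd_sconc]
  omega

lemma compact_of_sconc {u v : List Mon} (h : Compact (sconc u v)) : Compact u ∧ Compact v := by
  simp only [compact_iff, mem_indAlph_sconc, maxInd_sconc] at h ⊢
  refine ⟨fun i => ⟨fun hi => ⟨one_le_of_mem_indAlph hi, le_maxInd hi⟩, fun hi => ?_⟩,
    fun j => ⟨fun hj => ⟨one_le_of_mem_indAlph hj, le_maxInd hj⟩, fun hj => ?_⟩⟩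
  · exact ((h i).mpr (by omega)).resolve_right (by omega)
  · rcases (h (j + maxInd u)).mpr (by omega) with hj' | ⟨-, hj'⟩
    · exact absurd (le_maxInd hj') (by omega)
    · simpa using hj'

lemma compact_of_mem_foldr_sconc {fs : List (List Mon)} (h : Compact (fs.foldr sconc [])) :
    ∀ x ∈ fs, Compact x := by
  induction fs with
  | nil => simp
  | cons f t ih =>
    obtain ⟨hf, ht⟩ := compact_of_sconc h
    simpa [hf] using ih ht

theorem exists_sIrred_factorization (l : List Mon) :
    ∃ fs : List (List Mon), (∀ x ∈ fs, SIrred x) ∧ fs.foldr sconc [] = l := by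
  by_cases hl : l = []
  · exact ⟨[], by simp, hl.symm⟩
  by_cases hirr : SIrred l
  · exact ⟨[l], by simpa using hirr, sconc_nil l⟩
  obtain ⟨u, v, huv, hu, hv⟩ : ∃ u v, l = sconc u v ∧ u ≠ [] ∧ v ≠ [] := by
    simpa [SIrred, hl] using hirr
  have hlen : l.length = u.length + v.length := huv ▸ length_sconc u v
  have : 0 < u.length := List.length_pos_iff.mpr hu
  have : 0 < v.length := List.length_pos_iff.mpr hv
  obtain ⟨fu, hfu, hfu_eq⟩ := exists_sIrred_factorization u
  obtain ⟨fv, hfv, hfv_eq⟩ := exists_sIrred_factorization v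
  refine ⟨fu ++ fv, fun x hx => (List.mem_append.mp hx).elim (hfu x) (hfv x), ?_⟩
  rw [foldr_sconc_append, hfu_eq, hfv_eq, huv]
termination_by l.length

lemma SIrred.eq_of_sconc_eq_sconc {f g u v : List Mon} (hf : SIrred f) (hg : SIrred g)
    (h : sconc f u = sconc g v) : f = g := by
  rcases exists_sconc_of_sconc_eq_sconc h with ⟨w, hw, -⟩ | ⟨w, hw, -⟩
  · rcases hg.2 f w hw with h' | rfl
    · exact absurd h' hf.1
    · rw [hw, sconc_nil]
  · rcases hf.2 g w hw with h' | rfl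
    · exact absurd h' hg.1
    · rw [hw, sconc_nil]

theorem sIrred_factorization_unique {fs gs : List (List Mon)} (hfs : ∀ x ∈ fs, SIrred x)
    (hgs : ∀ x ∈ gs, SIrred x) (h : fs.foldr sconc [] = gs.foldr sconc []) : fs = gs := by
  induction fs generalizing gs with
  | nil =>
    cases gs with
    | nil => rfl
    | cons g s => exact absurd (sconc_eq_nil.mp h.symm).1 (hgs g (by simp)).1
  | cons f t ih =>
    cases gs with
    | nil => exact absurd (sconc_eq_nil.mp h).1 (hfs f (by simp)).1
    | cons g s =>
      simp only [List.foldr_cons] at h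
      obtain rfl := (hfs f (by simp)).eq_of_sconc_eq_sconc (hgs g (by simp)) h
      rw [ih (fun x hx => hfs x (by simp [hx])) (fun x hx => hgs x (by simp [hx]))
        (sconc_left_cancel h)]

end Mon

/-- ** Statement 4 **: compact lists form a submonoid, which is free:
every nonempty compact list factors uniquely into compact irreducible lists. -/
theorem compact_submonoid_free :
    Mon.Compact ([] : List Mon) ∧
    (∀ u v : List Mon, Mon.Compact u → Mon.Compact v → Mon.Compact (Mon.sconc u v)) ∧
    (∀ l : List Mon, Mon.Compact l → l ≠ [] →
      ∃! fs : List (List Mon),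
        (∀ x ∈ fs, Mon.Compact x ∧ Mon.SIrred x) ∧ fs.foldr Mon.sconc [] = l) := by
  refine ⟨Mon.compact_nil, fun _ _ => Mon.compact_sconc, fun l hl _ => ?_⟩
  obtain ⟨fs, hirr, rfl⟩ := Mon.exists_sIrred_factorization l
  refine ⟨fs, ⟨fun x hx => ⟨Mon.compact_of_mem_foldr_sconc hl x hx, hirr x hx⟩, rfl⟩, ?_⟩
  rintro gs ⟨hgs, hgs_eq⟩
  exact Mon.sIrred_factorization_unique (fun x hx => (hgs x hx).2) hirr hgs_eq
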